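/- arXiv:cond-mat/0506695 — 4 statements merged into one kernel-verified Lean document; each statement's English description precedes it below -/
import Mathlib

section
/- For every μ ∈ ℝ and every U ≥ 0, the HFz ground-state energy admits the one-matrix representation E^{hfz}_{μ,U} = min over one-particle density matrices γ of [ Tr{(-Δ - μ·Id)γ} + Tr{[-Δ - μ·Id + U·diag(ρ)]_-} ], where ρ(x) = γ_{x,x} and diag(ρ) is the diagonal matrix with entries ρ(x). -/
open Matrix
open scoped BigOperators Classical ComplexOrder

noncomputable section

/-- The discrete torus `Λ = (ℤ/Lℤ)^d`. -/
abbrev Lam (d L : ℕ) : Type := Fin d → ZMod L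

/-- `x` and `y` are nearest neighbors on the torus (ℓ¹-distance 1). -/
def isNN {d L : ℕ} (x y : Lam d L) : Prop :=
  ∃ ν : Fin d, (x ν = y ν + 1 ∨ x ν + 1 = y ν) ∧ ∀ μ : Fin d, μ ≠ ν → x μ = y μ

/-- The discrete Laplacian `Δ = T - 2d·Id` on the torus. -/
def lap (d L : ℕ) : Matrix (Lam d L) (Lam d L) ℂ :=
  (Matrix.of fun x y => if isNN x y then (1 : ℂ) else 0) - (2 * (d : ℂ)) • 1

/-- A one-particle density matrix: hermitian with `0 ≤ γ ≤ 1` as quadratic forms. -/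
def IsDM {d L : ℕ} [NeZero L] (γ : Matrix (Lam d L) (Lam d L) ℂ) : Prop :=
  γ.PosSemidef ∧ (1 - γ).PosSemidef

/-- `Tr{[X]_-}`: the sum of the negative eigenvalues of a hermitian matrix `X`
(junk value `0` if `X` is not hermitian). -/
def negTrace {n : Type} [Fintype n] [DecidableEq n] (X : Matrix n n ℂ) : ℝ :=
  if hX : X.IsHermitian then ∑ i, min (hX.eigenvalues i) 0 else 0

/-- The HFz energy functional. -/
def hfzE {d L : ℕ} [NeZero L] (μ U : ℝ) (γu γd : Matrix (Lam d L) (Lam d L) ℂ) : ℝ :=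
  (((-(lap d L) - (μ : ℂ) • 1) * (γu + γd)).trace).re
    + U * ∑ x, (γu x x).re * (γd x x).re

/-- The set of HFz energy values over pairs of one-particle density matrices. -/
def hfzEnergies (d L : ℕ) [NeZero L] (μ U : ℝ) : Set ℝ :=
  { E | ∃ γu γd : Matrix (Lam d L) (Lam d L) ℂ, IsDM γu ∧ IsDM γd ∧ hfzE μ U γu γd = E }

/-!
Fixing `γ_↑`, the HFz energy is affine in `γ_↓`: it equals
`Tr{(-Δ-μ)γ_↑} + Tr{(-Δ-μ+U·diag ρ_↑)γ_↓}`. For a hermitian `A`, the minimum of `Tr{Aγ}` over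
`0 ≤ γ ≤ 1` is `Tr{[A]_-}`: in an eigenbasis of `A` it reads `∑ λᵢ γ'ᵢᵢ` with `γ'ᵢᵢ ∈ [0, 1]`,
and the spectral projection onto the negative eigenspace attains it. Minimizing over `γ_↓`
first gives the one-matrix formula: every HFz energy dominates a one-matrix value and every
one-matrix value is an HFz energy, so the two infima agree.
-/

namespace Matrix

lemma PosSemidef.re_apply_self_mem_Icc {n : Type*} [DecidableEq n] {γ : Matrix n n ℂ}
    (h₀ : γ.PosSemidef) (h₁ : (1 - γ).PosSemidef) (i : n) : (γ i i).re ∈ Set.Icc 0 1 := by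
  have hγ := (Complex.nonneg_iff.mp (h₀.diag_nonneg (i := i))).1
  have h1γ := (Complex.nonneg_iff.mp (h₁.diag_nonneg (i := i))).1
  simp only [sub_apply, one_apply_eq, Complex.sub_re, Complex.one_re] at h1γ
  exact ⟨hγ, by linarith⟩

lemma IsHermitian.re_trace_mul_eq_sum {n : Type*} [Fintype n] [DecidableEq n]
    {A : Matrix n n ℂ} (hA : A.IsHermitian) (γ : Matrix n n ℂ) :
    (A * γ).trace.re = ∑ i, hA.eigenvalues i *
      ((star (hA.eigenvectorUnitary : Matrix n n ℂ) * γ * hA.eigenvectorUnitary) i i).re := by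
  set V : Matrix n n ℂ := (hA.eigenvectorUnitary : Matrix n n ℂ)
  have hcycle : (V * diagonal (RCLike.ofReal ∘ hA.eigenvalues) * star V * γ).trace
      = (diagonal (RCLike.ofReal ∘ hA.eigenvalues) * (star V * γ * V)).trace := by
    rw [Matrix.mul_assoc, Matrix.mul_assoc, trace_mul_comm]
    simp only [Matrix.mul_assoc]
  conv_lhs => rw [hA.spectral_theorem, Unitary.conjStarAlgAut_apply]
  rw [hcycle, trace, Complex.re_sum]
  simp [diagonal_mul]

end Matrix

open Matrix

lemma min_zero_le_mul_of_mem_Icc {a c : ℝ} (hc : c ∈ Set.Icc 0 1) : min a 0 ≤ a * c := by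
  rcases le_total 0 a with ha | ha
  · exact (min_le_right a 0).trans (mul_nonneg ha hc.1)
  · exact (min_le_left a 0).trans (by nlinarith [hc.2])

section NegTrace

variable {n : Type} [Fintype n] [DecidableEq n]

lemma negTrace_le_re_trace_mul {A γ : Matrix n n ℂ} (hA : A.IsHermitian)
    (h₀ : γ.PosSemidef) (h₁ : (1 - γ).PosSemidef) : negTrace A ≤ (A * γ).trace.re := by
  set V : Matrix n n ℂ := (hA.eigenvectorUnitary : Matrix n n ℂ)
  have hV : Vᴴ * V = 1 := Unitary.coe_star_mul_self hA.eigenvectorUnitary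
  have h₀' : (Vᴴ * γ * V).PosSemidef := h₀.conjTranspose_mul_mul_same V
  have h₁' : (1 - Vᴴ * γ * V).PosSemidef := by
    rw [show 1 - Vᴴ * γ * V = Vᴴ * (1 - γ) * V by
      rw [Matrix.mul_sub, Matrix.sub_mul, Matrix.mul_one, hV]]
    exact h₁.conjTranspose_mul_mul_same V
  rw [negTrace, dif_pos hA, hA.re_trace_mul_eq_sum]
  exact Finset.sum_le_sum fun i _ =>
    min_zero_le_mul_of_mem_Icc (h₀'.re_apply_self_mem_Icc h₁' i)

lemma exists_re_trace_mul_eq_negTrace {A : Matrix n n ℂ} (hA : A.IsHermitian) :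
    ∃ P : Matrix n n ℂ, P.PosSemidef ∧ (1 - P).PosSemidef ∧ (A * P).trace.re = negTrace A := by
  set V : Matrix n n ℂ := (hA.eigenvectorUnitary : Matrix n n ℂ)
  have hV : Vᴴ * V = 1 := Unitary.coe_star_mul_self hA.eigenvectorUnitary
  have hV' : V * Vᴴ = 1 := Unitary.coe_mul_star_self hA.eigenvectorUnitary
  set q : n → ℂ := fun i => if hA.eigenvalues i < 0 then 1 else 0
  have hq (i : n) : 0 ≤ q i ∧ 0 ≤ 1 - q i := by
    by_cases h : hA.eigenvalues i < 0 <;> simp [q, h]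
  refine ⟨V * diagonal q * Vᴴ, ?_, ?_, ?_⟩
  · exact (posSemidef_diagonal_iff.2 fun i => (hq i).1).mul_mul_conjTranspose_same V
  · rw [show 1 - V * diagonal q * Vᴴ = V * (1 - diagonal q) * Vᴴ by
      rw [Matrix.mul_sub, Matrix.sub_mul, Matrix.mul_one, hV'], ← diagonal_one, diagonal_sub]
    exact (posSemidef_diagonal_iff.2 fun i => (hq i).2).mul_mul_conjTranspose_same V
  · have hconj : star V * (V * diagonal q * Vᴴ) * V = diagonal q := by
      rw [star_eq_conjTranspose, ← Matrix.mul_assoc, ← Matrix.mul_assoc, hV, Matrix.one_mul,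
        Matrix.mul_assoc, hV, Matrix.mul_one]
    rw [hA.re_trace_mul_eq_sum, hconj, negTrace, dif_pos hA]
    refine Finset.sum_congr rfl fun i _ => ?_
    by_cases h : hA.eigenvalues i < 0
    · simp [q, h, min_eq_left h.le]
    · simp [q, h, min_eq_right (not_lt.mp h)]

end NegTrace

section Torus

variable {d L : ℕ}

lemma isNN.symm {x y : Lam d L} (h : isNN x y) : isNN y x := by
  obtain ⟨ν, hν, hothers⟩ := h
  exact ⟨ν, hν.symm.imp Eq.symm Eq.symm, fun μ hμ => (hothers μ hμ).symm⟩

lemma lap_isHermitian : (lap d L).IsHermitian := by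
  refine IsHermitian.sub ?_ (isHermitian_one.smul (by simp [IsSelfAdjoint]))
  ext x y
  by_cases h : isNN x y
  · simp [h, h.symm]
  · simp [h, mt isNN.symm h]

lemma isHermitian_neg_lap_sub_add_diagonal (μ U : ℝ) (ρ : Lam d L → ℝ) :
    (-(lap d L) - (μ : ℂ) • 1 + diagonal fun x => (U * ρ x : ℂ)).IsHermitian :=
  (lap_isHermitian.neg.sub (isHermitian_one.smul (by simp [IsSelfAdjoint]))).add
    (isHermitian_diagonal_of_self_adjoint _ (by ext x; simp))

lemma hfzE_eq_add_re_trace_mul [NeZero L] (μ U : ℝ) (γu γd : Matrix (Lam d L) (Lam d L) ℂ) :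
    hfzE μ U γu γd = ((-(lap d L) - (μ : ℂ) • 1) * γu).trace.re
      + ((-(lap d L) - (μ : ℂ) • 1 + diagonal fun x => (U * (γu x x).re : ℂ)) * γd).trace.re := by
  have hinteraction : (diagonal (fun x => (U * (γu x x).re : ℂ)) * γd).trace.re
      = U * ∑ x, (γu x x).re * (γd x x).re := by
    simp [trace, diagonal_mul, Complex.re_sum, Finset.mul_sum, mul_assoc]
  rw [hfzE, Matrix.mul_add, trace_add, Complex.add_re, Matrix.add_mul, trace_add, Complex.add_re,
    hinteraction, add_assoc]

end Torus

theorem hfz_one_matrix_reduction_general (d L : ℕ) [NeZero L] (μ U : ℝ) :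
    sInf (hfzEnergies d L μ U) =
      sInf { E : ℝ | ∃ γ : Matrix (Lam d L) (Lam d L) ℂ, IsDM γ ∧
        (((-(lap d L) - (μ : ℂ) • 1) * γ).trace).re
          + negTrace (-(lap d L) - (μ : ℂ) • 1
              + Matrix.diagonal (fun x => (U * (γ x x).re : ℂ))) = E } := by
  have hA (γ : Matrix (Lam d L) (Lam d L) ℂ) :=
    isHermitian_neg_lap_sub_add_diagonal μ U fun x => (γ x x).re
  apply csInf_eq_csInf_of_forall_exists_le
  · rintro _ ⟨γu, γd, hγu, hγd, rfl⟩
    refine ⟨_, ⟨γu, hγu, rfl⟩, ?_⟩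
    rw [hfzE_eq_add_re_trace_mul]
    exact add_le_add_right (negTrace_le_re_trace_mul (hA γu) hγd.1 hγd.2) _
  · rintro _ ⟨γ, hγ, rfl⟩
    obtain ⟨P, hP₀, hP₁, hP⟩ := exists_re_trace_mul_eq_negTrace (hA γ)
    exact ⟨hfzE μ U γ P, ⟨γ, P, hγ, ⟨hP₀, hP₁⟩, rfl⟩, by rw [hfzE_eq_add_re_trace_mul, hP]⟩

/-- one-matrix reduction, Eqs. (2.4)–(2.5): for every `μ` and `U ≥ 0`,
the HFz ground-state energy equals the minimum over a single one-particle density matrix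
`γ` of `Tr{(-Δ-μ)γ} + Tr{[-Δ-μ+U·diag(ρ)]_-}`, where `ρ(x) = γ_{x,x}`. -/
theorem hfz_one_matrix_reduction (d L : ℕ) (hd : 1 ≤ d) [NeZero L]
    (hLeven : Even L) (hL2 : 2 ≤ L) (μ U : ℝ) (hU : 0 ≤ U) :
    sInf (hfzEnergies d L μ U) =
      sInf { E : ℝ | ∃ γ : Matrix (Lam d L) (Lam d L) ℂ, IsDM γ ∧
        (((-(lap d L) - (μ : ℂ) • 1) * γ).trace).re
          + negTrace (-(lap d L) - (μ : ℂ) • 1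
              + Matrix.diagonal (fun x => (U * (γ x x).re : ℂ))) = E } :=
  hfz_one_matrix_reduction_general d L μ U
end
end

section
/- Let μ > 0, U > 0, and δ ≥ 2μ/U. Let γ be a one-particle density matrix with density ρ, set Ω := {x ∈ Λ : ρ(x) < δ}, and define the modified density ρ̃ by ρ̃(x) := ρ(x) for x ∈ Λ∖Ω and ρ̃(x) := min{μ/(2U), ρ(x)} for x ∈ Ω, viewed as a diagonal matrix. Then Tr{[-Δ - μ·Id + U·ρ̃]_-} ≥ Tr{[P_Ω(-Δ - μ·Id + U·ρ̃)P_Ω]_-} - (8d²/(Uδ))·|∂Ω|. -/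
open Matrix
open scoped BigOperators Classical ComplexOrder

noncomputable section

/-- The diagonal orthogonal projection `P_A` onto the coordinates in `A`. -/
def proj {d L : ℕ} (A : Set (Lam d L)) : Matrix (Lam d L) (Lam d L) ℂ :=
  Matrix.diagonal fun x => if x ∈ A then 1 else 0

/-- The boundary `∂Ω := {x ∈ Ω : x has a nearest neighbor outside Ω}`. -/
def bdry {d L : ℕ} (Ω : Set (Lam d L)) : Set (Lam d L) :=
  {x | x ∈ Ω ∧ ∃ y, y ∉ Ω ∧ isNN x y}

/-! Split `H = -Δ - μ + U ρ̃` along `P = P_Ω` and `Q = 1 - P`. Off `Ω` the density is at least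
`δ ≥ 2μ/U`, so `Q (H - g) Q ≥ 0` with the gap `g = U δ / 2`; completing the square then gives the
operator inequality `H ≥ P H P - g⁻¹ B Bᴴ` with `B = P H Q`. The sum of negative eigenvalues is
`Tr[X]_- = min {Re Tr[X γ] : 0 ≤ γ ≤ 1}`, hence monotone, and subtracting the positive matrix
`g⁻¹ B Bᴴ` lowers it by at most its trace. Finally `B` only contains the hopping terms across
`∂Ω`, so `Tr[B Bᴴ] ≤ 2d |∂Ω|` and `g⁻¹ · 2d ≤ 8d²/(Uδ)`. -/

namespace FeshbachDecoupling

open Finset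

section Matrices

variable {n : Type} [Fintype n] [DecidableEq n]

lemma re_trace_mul_nonneg {A B : Matrix n n ℂ} (hA : A.PosSemidef) (hB : B.PosSemidef) :
    0 ≤ (A * B).trace.re := by
  obtain ⟨C, rfl⟩ : ∃ C : Matrix n n ℂ, B = Cᴴ * C := by
    open scoped MatrixOrder in exact CStarAlgebra.nonneg_iff_eq_star_mul_self.mp hB.nonneg
  rw [← Matrix.mul_assoc, Matrix.trace_mul_cycle]
  exact (Complex.nonneg_iff.mp (hA.mul_mul_conjTranspose_same C).trace_nonneg).1

lemma _root_.Matrix.IsHermitian.trace_mul_eq_sum {X : Matrix n n ℂ} (hX : X.IsHermitian)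
    (γ : Matrix n n ℂ) :
    (X * γ).trace = ∑ i, (hX.eigenvalues i : ℂ) *
      (star (hX.eigenvectorUnitary : Matrix n n ℂ) * γ * hX.eigenvectorUnitary) i i := by
  conv_lhs => rw [hX.spectral_theorem, Unitary.conjStarAlgAut_apply]
  rw [Matrix.mul_assoc, Matrix.mul_assoc, Matrix.trace_mul_comm, Matrix.mul_assoc]
  simp [Matrix.trace]

lemma negTrace_le_re_trace_mul {X γ : Matrix n n ℂ} (hX : X.IsHermitian)
    (hγ : γ.PosSemidef) (hγ1 : (1 - γ).PosSemidef) :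
    negTrace X ≤ (X * γ).trace.re := by
  set V : Matrix n n ℂ := (hX.eigenvectorUnitary : Matrix n n ℂ)
  have hVV : star V * V = 1 := Matrix.mem_unitaryGroup_iff'.mp hX.eigenvectorUnitary.2
  have hdiag_nonneg : ∀ i, 0 ≤ (star V * γ * V) i i :=
    fun i => (hγ.conjTranspose_mul_mul_same V).diag_nonneg
  have hdiag_le_one : ∀ i, 0 ≤ 1 - (star V * γ * V) i i := fun i => by
    have := (hγ1.conjTranspose_mul_mul_same V).diag_nonneg (i := i)
    rwa [Matrix.mul_sub, Matrix.sub_mul, Matrix.mul_one, ← Matrix.star_eq_conjTranspose, hVV,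
      Matrix.sub_apply, Matrix.one_apply_eq] at this
  rw [negTrace, dif_pos hX, hX.trace_mul_eq_sum, Complex.re_sum]
  refine sum_le_sum fun i _ => ?_
  have h0 := (Complex.nonneg_iff.mp (hdiag_nonneg i)).1
  have h1 := (Complex.nonneg_iff.mp (hdiag_le_one i)).1
  simp only [Complex.sub_re, Complex.one_re] at h1
  rw [Complex.re_ofReal_mul]
  rcases le_total 0 (hX.eigenvalues i) with h | h
  · rw [min_eq_right h]; positivity
  · rw [min_eq_left h]; nlinarith

lemma exists_re_trace_mul_eq_negTrace {X : Matrix n n ℂ} (hX : X.IsHermitian) :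
    ∃ γ : Matrix n n ℂ, γ.PosSemidef ∧ (1 - γ).PosSemidef ∧ (X * γ).trace.re = negTrace X := by
  set V : Matrix n n ℂ := (hX.eigenvectorUnitary : Matrix n n ℂ)
  have hVV : star V * V = 1 := Matrix.mem_unitaryGroup_iff'.mp hX.eigenvectorUnitary.2
  have hVV' : V * star V = 1 := Matrix.mem_unitaryGroup_iff.mp hX.eigenvectorUnitary.2
  set e : n → ℂ := fun i => if hX.eigenvalues i < 0 then 1 else 0
  have conj_psd : ∀ f : n → ℂ, (∀ i, 0 ≤ f i) → (V * Matrix.diagonal f * star V).PosSemidef :=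
    fun f hf => (Matrix.PosSemidef.diagonal hf).mul_mul_conjTranspose_same V
  refine ⟨V * Matrix.diagonal e * star V, conj_psd e fun i => ?_, ?_, ?_⟩
  · by_cases h : hX.eigenvalues i < 0 <;> simp [e, h]
  · have : 1 - V * Matrix.diagonal e * star V = V * Matrix.diagonal (fun i => 1 - e i) * star V := by
      rw [← Matrix.diagonal_sub, Matrix.diagonal_one, Matrix.mul_sub, Matrix.sub_mul,
        Matrix.mul_one, hVV']
    rw [this]
    refine conj_psd _ fun i => ?_
    by_cases h : hX.eigenvalues i < 0 <;> simp [e, h]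
  · have : star V * (V * Matrix.diagonal e * star V) * V = Matrix.diagonal e := by
      simp only [← Matrix.mul_assoc, hVV, Matrix.one_mul]
      rw [Matrix.mul_assoc, hVV, Matrix.mul_one]
    rw [hX.trace_mul_eq_sum, this, negTrace, dif_pos hX, Complex.re_sum]
    refine sum_congr rfl fun i _ => ?_
    by_cases h : hX.eigenvalues i < 0
    · simp [e, h, min_eq_left h.le]
    · simp [e, h, min_eq_right (not_lt.mp h)]

theorem negTrace_sub_re_trace_le {X Y M : Matrix n n ℂ} (hX : X.IsHermitian)
    (hY : Y.IsHermitian) (hM : M.PosSemidef) (hXYM : (X - Y + M).PosSemidef) :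
    negTrace Y - M.trace.re ≤ negTrace X := by
  obtain ⟨γ, hγ, hγ1, hopt⟩ := exists_re_trace_mul_eq_negTrace hX
  have hYγ := negTrace_le_re_trace_mul hY hγ hγ1
  have h1 := re_trace_mul_nonneg hXYM hγ
  have h2 := re_trace_mul_nonneg hM hγ1
  have hsplit : (Y * γ).trace.re
      = (X * γ).trace.re - ((X - Y + M) * γ).trace.re + (M * γ).trace.re := by
    simp only [Matrix.add_mul, Matrix.sub_mul, Matrix.trace_add, Matrix.trace_sub,
      Complex.add_re, Complex.sub_re]
    ring
  have h3 : (M * (1 - γ)).trace.re = M.trace.re - (M * γ).trace.re := by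
    rw [Matrix.mul_sub, Matrix.mul_one, Matrix.trace_sub, Complex.sub_re]
  linarith

-- By Gershgorin's circle theorem.
theorem posSemidef_of_sum_norm_le {A : Matrix n n ℂ} (hA : A.IsHermitian)
    (h : ∀ i, ∑ j ∈ univ.erase i, ‖A i j‖ ≤ (A i i).re) : A.PosSemidef := by
  rw [hA.posSemidef_iff_eigenvalues_nonneg]
  intro i
  show 0 ≤ hA.eigenvalues i
  have hev : Module.End.HasEigenvalue (Matrix.toLin' A) (hA.eigenvalues i : ℂ) := by
    refine Module.End.hasEigenvalue_of_hasEigenvector (x := ⇑(hA.eigenvectorBasis i)) ⟨?_, ?_⟩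
    · rw [Module.End.mem_eigenspace_iff, Matrix.toLin'_apply, hA.mulVec_eigenvectorBasis,
        RCLike.real_smul_eq_coe_smul (K := ℂ)]
      rfl
    · exact (WithLp.ofLp_eq_zero 2).ne.2 (hA.eigenvectorBasis.orthonormal.ne_zero i)
  obtain ⟨k, hk⟩ := eigenvalue_mem_ball hev
  rw [Metric.mem_closedBall, dist_comm, dist_eq_norm] at hk
  have hre := Complex.re_le_norm (A k k - hA.eigenvalues i)
  simp only [Complex.sub_re, Complex.ofReal_re] at hre
  linarith [h k]

-- With `Q = 1 - P` and `B = P H Q`, completing the square gives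
-- `H - P H P + g⁻¹ B Bᴴ = g⁻¹ (B + g Q)(B + g Q)ᴴ + Q (H - g) Q`.
theorem posSemidef_sub_compression_add {H P : Matrix n n ℂ} (hH : H.IsHermitian)
    (hP : P.IsHermitian) (hPP : P * P = P) {g : ℝ} (hg : 0 < g)
    (hQ : ((1 - P) * (H - (g : ℂ) • 1) * (1 - P)).PosSemidef) :
    (H - P * H * P + g⁻¹ • (P * H * (1 - P) * (P * H * (1 - P))ᴴ)).PosSemidef := by
  generalize hQdef : 1 - P = Q at hQ ⊢
  have hQh : Qᴴ = Q := by rw [← hQdef, Matrix.conjTranspose_sub, Matrix.conjTranspose_one, hP.eq]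
  have hQQ : Q * Q = Q := by
    rw [← hQdef, Matrix.sub_mul, Matrix.mul_sub, Matrix.mul_sub, hPP]; noncomm_ring
  have hBh : (P * H * Q)ᴴ = Q * H * P := by
    simp only [Matrix.conjTranspose_mul, hQh, hP.eq, hH.eq, Matrix.mul_assoc]
  have hsplit : H = P * H * P + P * H * Q + (P * H * Q)ᴴ + Q * H * Q := by
    rw [hBh, ← hQdef]; noncomm_ring
  have hBQ : P * H * Q * Q = P * H * Q := by rw [Matrix.mul_assoc, hQQ]
  have hQBh : Q * (P * H * Q)ᴴ = (P * H * Q)ᴴ := by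
    simpa only [Matrix.conjTranspose_mul, hQh] using congrArg Matrix.conjTranspose hBQ
  generalize P * H * Q = B at hsplit hBQ hQBh ⊢
  have hsq : (B + g • Q) * (B + g • Q)ᴴ = B * Bᴴ + g • B + g • Bᴴ + (g * g) • Q := by
    rw [Matrix.conjTranspose_add, Matrix.conjTranspose_smul, star_trivial, hQh, Matrix.add_mul,
      Matrix.mul_add, Matrix.mul_add, Matrix.mul_smul, Matrix.smul_mul, Matrix.smul_mul,
      Matrix.mul_smul, hBQ, hQBh, hQQ, smul_smul]
    abel
  have hid : H - P * H * P + g⁻¹ • (B * Bᴴ)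
      = g⁻¹ • ((B + g • Q) * (B + g • Q)ᴴ) + Q * (H - (g : ℂ) • 1) * Q := by
    rw [hsq, Matrix.mul_sub, Matrix.sub_mul, Matrix.mul_smul, Matrix.smul_mul, Matrix.mul_one,
      hQQ, Complex.coe_smul]
    simp only [smul_add, smul_smul, ← mul_assoc, inv_mul_cancel₀ hg.ne', one_mul, one_smul]
    nth_rewrite 1 [hsplit]
    abel
  rw [hid]
  exact (((Matrix.posSemidef_self_mul_conjTranspose _).smul (inv_nonneg.mpr hg.le))).add hQ

theorem negTrace_compression_sub_le {H P : Matrix n n ℂ} (hH : H.IsHermitian)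
    (hP : P.IsHermitian) (hPP : P * P = P) {g : ℝ} (hg : 0 < g)
    (hQ : ((1 - P) * (H - (g : ℂ) • 1) * (1 - P)).PosSemidef) :
    negTrace (P * H * P) - g⁻¹ * (P * H * (1 - P) * (P * H * (1 - P))ᴴ).trace.re
      ≤ negTrace H := by
  have hPHP : (P * H * P).IsHermitian := by
    simpa only [hP.eq] using Matrix.isHermitian_conjTranspose_mul_mul P hH
  have hM := (Matrix.posSemidef_self_mul_conjTranspose (P * H * (1 - P))).smul
    (inv_nonneg.mpr hg.le)
  simpa only [Matrix.trace_smul, Complex.smul_re, smul_eq_mul] using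
    negTrace_sub_re_trace_le hH hPHP hM (posSemidef_sub_compression_add hH hP hPP hg hQ)

end Matrices

section Torus

variable {d L : ℕ}

lemma isNN_comm {x y : Lam d L} : isNN x y ↔ isNN y x := by
  constructor <;>
    exact fun ⟨ν, hν, hne⟩ => ⟨ν, hν.symm.imp Eq.symm Eq.symm, fun μ hμ => (hne μ hμ).symm⟩

lemma neg_lap_apply (x y : Lam d L) :
    (-lap d L) x y = (if x = y then 2 * (d : ℂ) else 0) - if isNN x y then 1 else 0 := by
  by_cases h : x = y <;> simp [lap, h]

lemma isHermitian_proj (A : Set (Lam d L)) : (proj A).IsHermitian := by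
  refine Matrix.isHermitian_diagonal_of_self_adjoint _ (funext fun x => ?_)
  split_ifs <;> simp_all

lemma one_sub_proj (A : Set (Lam d L)) : 1 - proj A = proj Aᶜ := by
  ext x y
  rcases eq_or_ne x y with rfl | h
  · by_cases hx : x ∈ A <;> simp [proj, hx]
  · simp [proj, h]

def schrodingerOp (d L : ℕ) (v : Lam d L → ℝ) : Matrix (Lam d L) (Lam d L) ℂ :=
  -lap d L + Matrix.diagonal fun x => (v x : ℂ)

lemma schrodingerOp_sub_smul_one (v : Lam d L → ℝ) (c : ℝ) :
    schrodingerOp d L v - (c : ℂ) • 1 = schrodingerOp d L fun x => v x - c := by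
  ext x y
  by_cases h : x = y <;> simp [schrodingerOp, h]
  ring

lemma schrodingerOp_apply_of_ne (v : Lam d L → ℝ) {x y : Lam d L} (h : x ≠ y) :
    schrodingerOp d L v x y = -if isNN x y then 1 else 0 := by
  rw [schrodingerOp, Matrix.add_apply, neg_lap_apply, Matrix.diagonal_apply_ne _ h, if_neg h]
  simp

variable [NeZero L]

-- Every neighbour of `x` is `x ± e_ν` for some direction `ν`.
lemma card_filter_isNN_le (x : Lam d L) : #{y | isNN x y} ≤ 2 * d := by
  have hsub : ({y | isNN x y} : Finset (Lam d L)) ⊆ (univ : Finset (Fin d × Bool)).image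
      fun p => Function.update x p.1 (x p.1 + if p.2 then 1 else -1) := by
    intro y hy
    obtain ⟨ν, hν, hne⟩ := (mem_filter.mp hy).2
    refine mem_image.mpr ⟨(ν, decide (x ν + 1 = y ν)), mem_univ _, funext fun μ => ?_⟩
    rcases eq_or_ne μ ν with rfl | hμ
    · by_cases hc : x μ + 1 = y μ
      · simp [hc]
      · simp only [hc, decide_false, Function.update_self, Bool.false_eq_true, if_false]
        linear_combination hν.resolve_right hc
    · simp [Function.update_of_ne hμ, hne μ hμ]
  calc _ ≤ _ := card_le_card hsub
    _ ≤ _ := card_image_le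
    _ = 2 * d := by simp [mul_comm]

theorem posSemidef_neg_lap : (-lap d L).PosSemidef := by
  have hherm : (-lap d L).IsHermitian := by
    ext x y
    simp only [Matrix.conjTranspose_apply, neg_lap_apply, eq_comm (a := y), isNN_comm]
    split_ifs <;> simp_all
  refine posSemidef_of_sum_norm_le hherm fun x => ?_
  have hoff : ∀ y ∈ univ.erase x, ‖(-lap d L) x y‖ = if isNN x y then 1 else 0 := by
    intro y hy
    rw [neg_lap_apply, if_neg (ne_of_mem_erase hy).symm]
    split_ifs <;> simp
  have hsum : ∑ y ∈ univ.erase x, (if isNN x y then (1 : ℝ) else 0)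
      + (if isNN x x then 1 else 0) ≤ 2 * d := by
    rw [sum_erase_add _ _ (mem_univ x), ← natCast_card_filter]
    exact_mod_cast card_filter_isNN_le x
  have hdiag : ((-lap d L) x x).re = 2 * d - if isNN x x then 1 else 0 := by
    rw [neg_lap_apply, if_pos rfl]
    split_ifs <;> simp
  rw [sum_congr rfl hoff, hdiag]
  linarith

lemma isHermitian_schrodingerOp (v : Lam d L → ℝ) : (schrodingerOp d L v).IsHermitian :=
  posSemidef_neg_lap.isHermitian.add
    (Matrix.isHermitian_diagonal_of_self_adjoint _ (funext fun _ => Complex.conj_ofReal _))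

lemma proj_mul_proj (A : Set (Lam d L)) : proj A * proj A = proj A := by
  rw [proj, Matrix.diagonal_mul_diagonal]
  congr 1
  ext x
  split_ifs <;> simp

lemma proj_mul_mul_proj_apply (A B : Set (Lam d L)) (M : Matrix (Lam d L) (Lam d L) ℂ)
    (x y : Lam d L) : (proj A * M * proj B) x y = if x ∈ A ∧ y ∈ B then M x y else 0 := by
  by_cases hx : x ∈ A <;> by_cases hy : y ∈ B <;>
    simp [proj, Matrix.diagonal_mul, Matrix.mul_diagonal, hx, hy]

theorem posSemidef_proj_mul_schrodingerOp_mul_proj {A : Set (Lam d L)} {v : Lam d L → ℝ}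
    (hv : ∀ x ∈ A, 0 ≤ v x) : (proj A * schrodingerOp d L v * proj A).PosSemidef := by
  have hdiag : proj A * Matrix.diagonal (fun x => (v x : ℂ)) * proj A
      = Matrix.diagonal fun x => if x ∈ A then (v x : ℂ) else 0 := by
    ext x y
    rw [proj_mul_mul_proj_apply]
    by_cases h : x = y <;> by_cases hx : x ∈ A <;> simp [h, hx]
  rw [schrodingerOp, Matrix.mul_add, Matrix.add_mul, hdiag]
  refine .add ?_ (.diagonal fun x => ?_)
  · simpa only [(isHermitian_proj A).eq] using
      posSemidef_neg_lap.conjTranspose_mul_mul_same (proj A)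
  · show (0 : ℂ) ≤ _
    split_ifs with hx
    · exact_mod_cast hv x hx
    · rfl

-- Only the hopping terms from `x ∈ Ω` to a neighbour `y ∉ Ω` survive in `B = P_Ω H P_Ωᶜ`, so
-- row `x` of `B Bᴴ` vanishes unless `x ∈ ∂Ω`, and otherwise counts at most `2d` neighbours.
theorem re_trace_boundary_le (Ω : Set (Lam d L)) (v : Lam d L → ℝ) :
    (proj Ω * schrodingerOp d L v * proj Ωᶜ * (proj Ω * schrodingerOp d L v * proj Ωᶜ)ᴴ).trace.re
      ≤ 2 * d * (bdry Ω).ncard := by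
  have hB : ∀ x y, (proj Ω * schrodingerOp d L v * proj Ωᶜ) x y
      = -if x ∈ Ω ∧ y ∉ Ω ∧ isNN x y then 1 else 0 := by
    intro x y
    rw [proj_mul_mul_proj_apply]
    by_cases hx : x ∈ Ω <;> by_cases hy : y ∈ Ω
    · simp [hx, hy]
    · rw [schrodingerOp_apply_of_ne v (ne_of_mem_of_not_mem hx hy)]
      simp [hx, hy]
    all_goals simp [hx, hy]
  generalize proj Ω * schrodingerOp d L v * proj Ωᶜ = B at hB ⊢
  have hrow : ∀ x, ((B * Bᴴ) x x).re = #{y | x ∈ Ω ∧ y ∉ Ω ∧ isNN x y} := by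
    intro x
    simp only [Matrix.mul_apply, Matrix.conjTranspose_apply, hB, Complex.re_sum,
      natCast_card_filter]
    refine sum_congr rfl fun y _ => ?_
    split_ifs <;> simp
  have hcard : ∀ x, (#{y | x ∈ Ω ∧ y ∉ Ω ∧ isNN x y} : ℝ)
      ≤ if x ∈ bdry Ω then 2 * (d : ℝ) else 0 := by
    intro x
    split_ifs with hx
    · have hsub : ({y | x ∈ Ω ∧ y ∉ Ω ∧ isNN x y} : Finset (Lam d L))
          ⊆ ({y | isNN x y} : Finset (Lam d L)) :=
        fun y hy => mem_filter.mpr ⟨mem_univ y, (mem_filter.mp hy).2.2.2⟩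
      exact_mod_cast (card_le_card hsub).trans (card_filter_isNN_le x)
    · rw [Nat.cast_nonpos, card_eq_zero, filter_eq_empty_iff]
      rintro y - ⟨hxΩ, hy, hnn⟩
      exact hx ⟨hxΩ, y, hy, hnn⟩
  calc (B * Bᴴ).trace.re = ∑ x, ((B * Bᴴ) x x).re := Complex.re_sum _ _
    _ ≤ ∑ x, if x ∈ bdry Ω then 2 * (d : ℝ) else 0 :=
      sum_le_sum fun x _ => (hrow x).le.trans (hcard x)
    _ = 2 * d * (bdry Ω).ncard := by
      rw [← sum_filter, sum_const, nsmul_eq_mul, Set.ncard_eq_toFinset_card',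
        Set.filter_mem_univ_eq_toFinset, mul_comm]

end Torus

end FeshbachDecoupling

open FeshbachDecoupling in
theorem feshbach_decoupling_bound_general (d L : ℕ) [NeZero L]
    (μ U δ : ℝ) (hμ : 0 < μ) (hU : 0 < U)
    (hδ : 2 * μ / U ≤ δ)
    (γ : Matrix (Lam d L) (Lam d L) ℂ)
    (Ω : Set (Lam d L)) (hΩ : Ω = {x | (γ x x).re < δ})
    (ρt : Lam d L → ℝ)
    (hρt : ∀ x, ρt x = if x ∈ Ω then min (μ / (2 * U)) (γ x x).re else (γ x x).re) :
    negTrace (proj Ω * (-(lap d L) - (μ : ℂ) • 1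
          + Matrix.diagonal (fun x => (U * ρt x : ℂ))) * proj Ω)
        - 8 * d ^ 2 / (U * δ) * (bdry Ω).ncard
      ≤ negTrace (-(lap d L) - (μ : ℂ) • 1
          + Matrix.diagonal (fun x => (U * ρt x : ℂ))) := by
  have hδ0 : 0 < δ := (by positivity : 0 < 2 * μ / U).trans_le hδ
  have hH : -(lap d L) - (μ : ℂ) • 1 + Matrix.diagonal (fun x => (U * ρt x : ℂ))
      = schrodingerOp d L fun x => U * ρt x - μ := by
    rw [← schrodingerOp_sub_smul_one, schrodingerOp]
    push_cast
    abel
  have hgap : ∀ x ∈ Ωᶜ, 0 ≤ U * ρt x - μ - U * δ / 2 := by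
    intro x hx
    have hρ : δ ≤ ρt x := by
      rw [hρt, if_neg hx]
      simpa [hΩ] using hx
    have := (div_le_iff₀ hU).mp hδ
    nlinarith
  have key := negTrace_compression_sub_le (isHermitian_schrodingerOp _) (isHermitian_proj Ω)
    (proj_mul_proj Ω) (by positivity : 0 < U * δ / 2)
    (by rw [one_sub_proj, schrodingerOp_sub_smul_one]
        exact posSemidef_proj_mul_schrodingerOp_mul_proj hgap)
  rw [one_sub_proj] at key
  have hpenalty := mul_le_mul_of_nonneg_left (re_trace_boundary_le Ω fun x => U * ρt x - μ)
    (inv_nonneg.mpr (by positivity : 0 ≤ U * δ / 2))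
  have hcoef : (U * δ / 2)⁻¹ * (2 * d) ≤ 8 * d ^ 2 / (U * δ) := by
    have hd : (d : ℝ) ≤ d ^ 2 := by exact_mod_cast Nat.le_self_pow two_ne_zero d
    calc _ = 4 * d / (U * δ) := by field_simp; ring
      _ ≤ _ := by gcongr; norm_num
  rw [hH]
  linarith [mul_le_mul_of_nonneg_right hcoef (Nat.cast_nonneg (α := ℝ) (bdry Ω).ncard)]

/-- Lemma 3.2, decoupling the high and low density regions: with
`Ω = {ρ < δ}`, `δ ≥ 2μ/U`, and the modified density `ρ̃` (equal to `ρ` off `Ω` and to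
`min{μ/(2U), ρ}` on `Ω`), one has
`Tr{[-Δ-μ+Uρ̃]_-} ≥ Tr{[P_Ω(-Δ-μ+Uρ̃)P_Ω]_-} - (8d²/(Uδ))|∂Ω|`. -/
theorem feshbach_decoupling_bound (d L : ℕ) (hd : 1 ≤ d) [NeZero L]
    (hLeven : Even L) (hL2 : 2 ≤ L) (μ U δ : ℝ) (hμ : 0 < μ) (hU : 0 < U)
    (hδ : 2 * μ / U ≤ δ)
    (γ : Matrix (Lam d L) (Lam d L) ℂ) (hγ : IsDM γ)
    (Ω : Set (Lam d L)) (hΩ : Ω = {x | (γ x x).re < δ})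
    (ρt : Lam d L → ℝ)
    (hρt : ∀ x, ρt x = if x ∈ Ω then min (μ / (2 * U)) (γ x x).re else (γ x x).re) :
    negTrace (proj Ω * (-(lap d L) - (μ : ℂ) • 1
          + Matrix.diagonal (fun x => (U * ρt x : ℂ))) * proj Ω)
        - 8 * d ^ 2 / (U * δ) * (bdry Ω).ncard
      ≤ negTrace (-(lap d L) - (μ : ℂ) • 1
          + Matrix.diagonal (fun x => (U * ρt x : ℂ))) :=
  feshbach_decoupling_bound_general d L μ U δ hμ hU hδ γ Ω hΩ ρt hρt
end
end

section
/- Let A ⊆ B ⊆ Λ and denote Δ_A := P_A Δ P_A and Δ_B := P_B Δ P_B. Then for every x ∈ A and every β > 0, the diagonal heat-kernel entries satisfy (e^{βΔ_A})_{x,x} ≤ (e^{βΔ_B})_{x,x}. -/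
open Matrix
open scoped BigOperators Classical ComplexOrder

noncomputable section

/-!
Since `P_A² = P_A`, we have `P_A Δ P_A = P_A T P_A - 2d P_A`, and the two terms commute, so
`e^{βΔ_A} = e^{β P_A T P_A} e^{-2dβ P_A}`; at a diagonal entry `x ∈ A` the second factor contributes
the scalar `e^{-2dβ}`. The matrix `P_A T P_A` is entrywise nonnegative and entrywise increasing in
`A`, hence so is each of its powers, and the exponential series has nonnegative coefficients.
-/

namespace Matrix

variable {n : Type*} [Fintype n] [DecidableEq n]

theorem pow_apply_le_pow_apply {α : Type*} [Semiring α] [PartialOrder α] [IsOrderedRing α]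
    {A B : Matrix n n α} (hA : ∀ i j, 0 ≤ A i j) (hAB : ∀ i j, A i j ≤ B i j) (k : ℕ) :
    ∀ i j, (A ^ k) i j ≤ (B ^ k) i j := by
  have hB : ∀ i j, 0 ≤ B i j := fun i j => (hA i j).trans (hAB i j)
  induction k with
  | zero => exact fun _ _ => le_rfl
  | succ k ih =>
    intro i j
    rw [pow_succ, pow_succ, mul_apply, mul_apply]
    exact Finset.sum_le_sum fun l _ =>
      mul_le_mul (ih i l) (hAB l j) (hA l j) (pow_apply_nonneg hB k i l)

variable {𝕜 : Type*} [RCLike 𝕜]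

theorem hasSum_exp_apply (A : Matrix n n 𝕜) (i j : n) :
    HasSum (fun k => ((k.factorial⁻¹ : ℝ) : 𝕜) * (A ^ k) i j) (NormedSpace.exp A i j) := by
  have := open scoped Norms.Operator in NormedSpace.exp_series_hasSum_exp' (𝕂 := ℝ) A
  have h := Pi.hasSum.1 (Pi.hasSum.1 this i) j
  simp only [smul_apply, RCLike.real_smul_eq_coe_mul] at h
  exact h

theorem exp_apply_le_exp_apply {A B : Matrix n n 𝕜} (hA : ∀ i j, 0 ≤ A i j)
    (hAB : ∀ i j, A i j ≤ B i j) (i j : n) :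
    NormedSpace.exp A i j ≤ NormedSpace.exp B i j :=
  hasSum_le (fun k => mul_le_mul_of_nonneg_left (pow_apply_le_pow_apply hA hAB k i j)
      (RCLike.ofReal_nonneg.mpr (by positivity)))
    (hasSum_exp_apply A i j) (hasSum_exp_apply B i j)

end Matrix

theorem IsIdempotentElem.commute_mul_mul_self {R : Type*} [Semigroup R] {p : R}
    (hp : IsIdempotentElem p) (a : R) : Commute (p * a * p) p := by
  simp only [Commute, SemiconjBy, mul_assoc, ← mul_assoc p p, hp.eq]

/-- The nearest-neighbour hopping matrix `T`. -/
def hopping (d L : ℕ) : Matrix (Lam d L) (Lam d L) ℂ :=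
  Matrix.of fun x y => if isNN x y then (1 : ℂ) else 0

theorem lap_eq_hopping_sub (d L : ℕ) : lap d L = hopping d L - (2 * (d : ℂ)) • 1 := rfl

theorem hopping_apply_nonneg {d L : ℕ} (x y : Lam d L) : 0 ≤ hopping d L x y := by
  simp only [hopping, of_apply]; split_ifs <;> simp

variable {d L : ℕ} [NeZero L]

theorem isIdempotentElem_proj (A : Set (Lam d L)) : IsIdempotentElem (proj A) := by
  unfold proj IsIdempotentElem
  rw [diagonal_mul_diagonal]
  congr 1; ext x; split_ifs <;> simp

theorem proj_mul_mul_proj_apply (A : Set (Lam d L)) (M : Matrix (Lam d L) (Lam d L) ℂ)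
    (x y : Lam d L) : (proj A * M * proj A) x y = if x ∈ A ∧ y ∈ A then M x y else 0 := by
  by_cases hx : x ∈ A <;> by_cases hy : y ∈ A <;> simp [proj, hx, hy]

theorem proj_mul_mul_proj_apply_nonneg (A : Set (Lam d L)) {M : Matrix (Lam d L) (Lam d L) ℂ}
    (hM : ∀ x y, 0 ≤ M x y) (x y : Lam d L) : 0 ≤ (proj A * M * proj A) x y := by
  rw [proj_mul_mul_proj_apply]
  split_ifs
  exacts [hM x y, le_rfl]

theorem proj_mul_mul_proj_apply_le {A B : Set (Lam d L)} (hAB : A ⊆ B)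
    {M : Matrix (Lam d L) (Lam d L) ℂ} (hM : ∀ x y, 0 ≤ M x y) (x y : Lam d L) :
    (proj A * M * proj A) x y ≤ (proj B * M * proj B) x y := by
  simp only [proj_mul_mul_proj_apply]
  split_ifs with hA hB hB
  exacts [le_rfl, absurd ⟨hAB hA.1, hAB hA.2⟩ hB, hM x y, le_rfl]

theorem proj_mul_lap_mul_proj (A : Set (Lam d L)) :
    proj A * lap d L * proj A = proj A * hopping d L * proj A - (2 * (d : ℂ)) • proj A := by
  rw [lap_eq_hopping_sub, mul_sub, sub_mul, Matrix.mul_smul, Matrix.smul_mul, mul_one,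
    (isIdempotentElem_proj A).eq]

theorem mul_exp_smul_proj_apply (A : Set (Lam d L)) (M : Matrix (Lam d L) (Lam d L) ℂ) (c : ℂ)
    {x : Lam d L} (hx : x ∈ A) (y : Lam d L) :
    (M * NormedSpace.exp (c • proj A)) y x = M y x * Complex.exp c := by
  rw [proj, ← diagonal_smul, Matrix.exp_diagonal, mul_diagonal]
  simp [hx, Complex.exp_eq_exp_ℂ]

theorem exp_smul_proj_mul_lap_mul_proj_apply {A : Set (Lam d L)} {x : Lam d L} (hx : x ∈ A)
    (t : ℂ) :
    NormedSpace.exp (t • (proj A * lap d L * proj A)) x x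
      = NormedSpace.exp (t • (proj A * hopping d L * proj A)) x x * Complex.exp (-(2 * d * t)) := by
  have hcomm := ((isIdempotentElem_proj A).commute_mul_mul_self (hopping d L)).smul_right
    (-(2 * d * t)) |>.smul_left t
  rw [proj_mul_lap_mul_proj, smul_sub, sub_eq_add_neg, smul_smul, ← neg_smul, mul_comm t,
    Matrix.exp_add_of_commute _ _ hcomm, mul_exp_smul_proj_apply A _ _ hx]

theorem heat_kernel_domain_monotone_general (d L : ℕ) [NeZero L]
    (A B : Set (Lam d L)) (hAB : A ⊆ B)
    (x : Lam d L) (hx : x ∈ A) (β : ℝ) (hβ : 0 < β) :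
    ((NormedSpace.exp ((β : ℂ) • (proj A * lap d L * proj A))) x x).re
      ≤ ((NormedSpace.exp ((β : ℂ) • (proj B * lap d L * proj B))) x x).re := by
  rw [exp_smul_proj_mul_lap_mul_proj_apply hx, exp_smul_proj_mul_lap_mul_proj_apply (hAB hx)]
  have hβ' : (0 : ℂ) ≤ β := Complex.zero_le_real.mpr hβ.le
  have hheat : NormedSpace.exp ((β : ℂ) • (proj A * hopping d L * proj A)) x x
      ≤ NormedSpace.exp ((β : ℂ) • (proj B * hopping d L * proj B)) x x :=
    Matrix.exp_apply_le_exp_apply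
      (fun y z => mul_nonneg hβ' (proj_mul_mul_proj_apply_nonneg A hopping_apply_nonneg y z))
      (fun y z => mul_le_mul_of_nonneg_left
        (proj_mul_mul_proj_apply_le hAB hopping_apply_nonneg y z) hβ') x x
  have hdecay : 0 ≤ Complex.exp (-(2 * d * β)) := by
    rw [show -(2 * d * (β : ℂ)) = ((-(2 * d * β) : ℝ) : ℂ) by push_cast; ring,
      ← Complex.ofReal_exp]
    exact Complex.zero_le_real.mpr (Real.exp_pos _).le
  exact Complex.re_le_re (mul_le_mul_of_nonneg_right hheat hdecay)

/-- Lemma 3.4, domain monotonicity of the heat kernel: for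
`A ⊆ B ⊆ Λ`, `x ∈ A` and `β > 0`, `(e^{βΔ_A})_{x,x} ≤ (e^{βΔ_B})_{x,x}`. -/
theorem heat_kernel_domain_monotone (d L : ℕ) (hd : 1 ≤ d) [NeZero L]
    (hLeven : Even L) (hL2 : 2 ≤ L) (A B : Set (Lam d L)) (hAB : A ⊆ B)
    (x : Lam d L) (hx : x ∈ A) (β : ℝ) (hβ : 0 < β) :
    ((NormedSpace.exp ((β : ℂ) • (proj A * lap d L * proj A))) x x).re
      ≤ ((NormedSpace.exp ((β : ℂ) • (proj B * lap d L * proj B))) x x).re :=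
  heat_kernel_domain_monotone_general d L A B hAB x hx β hβ
end
end

section
/- Let Ω ⊆ Λ, let k ∈ Λ* := (2π/L)·(ℤ/Lℤ)^d, let ψ_k ∈ ℂ^Λ be the normalized plane wave ψ_k(x) := |Λ|^{-1/2} e^{-ik·x}, and define the boundary vector b_k := P_{∂Ω} Δ P_{Ω^c} ψ_k. If ω(k) := Σ_{ν=1}^d 2(1 - cos k_ν) ≤ 1/2, then ‖b_k‖² ≥ |∂Ω|/(4|Λ|). -/
open Matrix
open scoped BigOperators Classical ComplexOrder

noncomputable section

/-- The normalized plane wave `ψ_k(x) = |Λ|^{-1/2} e^{-ik·x}` on `Λ = (ℤ/Lℤ)^d`, for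
`k = (2π/L)κ ∈ Λ*` with `κ ∈ (ℤ/Lℤ)^d`. -/
def planeWave (d L : ℕ) [NeZero L] (κ : Lam d L) : Lam d L → ℂ :=
  fun x => ((Real.sqrt ((L : ℝ) ^ d))⁻¹ : ℝ) *
    Complex.exp (-Complex.I * ((2 * Real.pi / L : ℝ) : ℂ) *
      ((∑ ν, (κ ν).val * (x ν).val : ℕ) : ℂ))

/-!
At a boundary site `x ∈ ∂Ω` the boundary vector is `b_k(x) = ∑ ψ_k(y)`, summed over the (at
least one) neighbours `y ∉ Ω` of `x`. For neighbours `x, y` differing in direction `ν`,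
`conj ψ_k(x) · ψ_k(y) = |Λ|⁻¹ e^{± i k_ν}`, whose real part `|Λ|⁻¹ cos k_ν` is at least
`(3/4)|Λ|⁻¹` because `ω(k) ≤ 1/2`. So the terms of `b_k(x)` cannot cancel:
`|Λ|^{-1/2} |b_k(x)| ≥ Re (conj ψ_k(x) · b_k(x)) ≥ (3/4)|Λ|⁻¹`, i.e. `|b_k(x)|² ≥ 9/(16|Λ|)`,
and summing over `∂Ω` gives the bound. Writing `ψ_k` through the standard additive character
of `ZMod L` makes the wrap-around of the torus automatic.
-/

lemma le_norm_mul_norm_sum_of_le_re {ι : Type*} {s : Finset ι} (hs : s.Nonempty) (a : ℂ)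
    (f : ι → ℂ) {c : ℝ} (hc : 0 ≤ c) (h : ∀ i ∈ s, c ≤ (starRingEnd ℂ a * f i).re) :
    c ≤ ‖a‖ * ‖∑ i ∈ s, f i‖ := by
  obtain ⟨i, hi⟩ := hs
  calc c ≤ (starRingEnd ℂ a * f i).re := h i hi
    _ ≤ ∑ j ∈ s, (starRingEnd ℂ a * f j).re :=
      Finset.single_le_sum (fun j hj ↦ hc.trans (h j hj)) hi
    _ = (starRingEnd ℂ a * ∑ j ∈ s, f j).re := by rw [Finset.mul_sum, Complex.re_sum]
    _ ≤ ‖starRingEnd ℂ a * ∑ j ∈ s, f j‖ := Complex.re_le_norm _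
    _ = ‖a‖ * ‖∑ i ∈ s, f i‖ := by rw [norm_mul, Complex.norm_conj]

lemma three_quarters_le_cos_of_sum_le {ι : Type*} [Fintype ι] {θ : ι → ℝ}
    (h : ∑ i, 2 * (1 - Real.cos (θ i)) ≤ 1 / 2) (i : ι) : 3 / 4 ≤ Real.cos (θ i) := by
  have hi : 2 * (1 - Real.cos (θ i)) ≤ 1 / 2 :=
    (Finset.single_le_sum (fun j _ ↦ by nlinarith [Real.cos_le_one (θ j)])
      (Finset.mem_univ i)).trans h
  linarith

lemma re_stdAddChar {N : ℕ} [NeZero N] (j : ZMod N) :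
    (ZMod.stdAddChar j).re = Real.cos (2 * Real.pi * j.val / N) := by
  rw [ZMod.stdAddChar_apply, ZMod.toCircle_apply, ← Complex.exp_ofReal_mul_I_re]
  congr 2
  push_cast
  ring

lemma re_stdAddChar_neg {N : ℕ} [NeZero N] (j : ZMod N) :
    (ZMod.stdAddChar (-j)).re = (ZMod.stdAddChar j).re := by
  rw [AddChar.map_neg_eq_conj, Complex.conj_re]

lemma isNN.exists_sub_eq_single {d L : ℕ} {x y : Lam d L} (h : isNN x y) :
    ∃ ν, x - y = Pi.single ν 1 ∨ x - y = -Pi.single ν 1 := by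
  obtain ⟨ν, hν, hrest⟩ := h
  refine ⟨ν, hν.imp (fun hν ↦ ?_) (fun hν ↦ ?_)⟩ <;> funext μ <;> by_cases hμ : μ = ν
  · subst hμ; simp [hν]
  · simp [hμ, hrest μ hμ]
  · subst hμ; simp [← hν]
  · simp [hμ, hrest μ hμ]

section Torus

variable {d L : ℕ} [NeZero L]

lemma planeWave_eq_stdAddChar (κ x : Lam d L) :
    planeWave d L κ x = ((Real.sqrt ((L : ℝ) ^ d))⁻¹ : ℝ) * ZMod.stdAddChar (-(κ ⬝ᵥ x)) := by
  have hdot : -(κ ⬝ᵥ x) = ((-(∑ ν, (κ ν).val * (x ν).val : ℕ) : ℤ) : ZMod L) := by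
    simp [dotProduct, ZMod.natCast_val]
  rw [hdot, ZMod.stdAddChar_coe, planeWave]
  congr 2
  push_cast
  ring

lemma norm_planeWave_sq (κ x : Lam d L) : ‖planeWave d L κ x‖ ^ 2 = ((L : ℝ) ^ d)⁻¹ := by
  rw [planeWave_eq_stdAddChar, norm_mul, AddChar.norm_apply, mul_one, Complex.norm_real,
    Real.norm_eq_abs, sq_abs, inv_pow, Real.sq_sqrt (by positivity)]

lemma conj_planeWave_mul_planeWave (κ x y : Lam d L) :
    starRingEnd ℂ (planeWave d L κ x) * planeWave d L κ y
      = ((L : ℝ) ^ d)⁻¹ * ZMod.stdAddChar (κ ⬝ᵥ (x - y)) := by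
  have hsqrt : (Real.sqrt ((L : ℝ) ^ d))⁻¹ * (Real.sqrt ((L : ℝ) ^ d))⁻¹ = ((L : ℝ) ^ d)⁻¹ := by
    rw [← mul_inv, Real.mul_self_sqrt (by positivity)]
  rw [planeWave_eq_stdAddChar, planeWave_eq_stdAddChar, map_mul, Complex.conj_ofReal,
    ← AddChar.map_neg_eq_conj, neg_neg, mul_mul_mul_comm, ← Complex.ofReal_mul, hsqrt,
    ← AddChar.map_add_eq_mul, dotProduct_sub, sub_eq_add_neg]

lemma re_conj_planeWave_mul_planeWave_of_isNN (κ : Lam d L) {x y : Lam d L} (h : isNN x y) :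
    ∃ ν, (starRingEnd ℂ (planeWave d L κ x) * planeWave d L κ y).re
      = ((L : ℝ) ^ d)⁻¹ * Real.cos (2 * Real.pi * (κ ν).val / L) := by
  obtain ⟨ν, hxy⟩ := h.exists_sub_eq_single
  refine ⟨ν, ?_⟩
  rw [conj_planeWave_mul_planeWave, Complex.re_ofReal_mul]
  rcases hxy with hxy | hxy
  · rw [hxy, dotProduct_single, mul_one, re_stdAddChar]
  · rw [hxy, dotProduct_neg, dotProduct_single, mul_one, re_stdAddChar_neg, re_stdAddChar]

lemma proj_mul_lap_mul_proj_mulVec_apply {A B : Set (Lam d L)} (hAB : Disjoint A B)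
    (v : Lam d L → ℂ) {x : Lam d L} (hx : x ∈ A) :
    ((proj A * lap d L * proj B) *ᵥ v) x = ∑ y with isNN x y ∧ y ∈ B, v y := by
  rw [Finset.sum_filter, mulVec, dotProduct]
  refine Finset.sum_congr rfl fun y _ ↦ ?_
  rw [proj, proj, mul_diagonal, diagonal_mul]
  by_cases hy : y ∈ B
  · have hxy : x ≠ y := fun h ↦ hAB.ne_of_mem hx hy h
    simp [hx, hy, lap, one_apply_ne hxy]
  · simp [hy]

def boundaryVector (Ω : Set (Lam d L)) (κ : Lam d L) : Lam d L → ℂ :=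
  (proj (bdry Ω) * lap d L * proj Ωᶜ) *ᵥ planeWave d L κ

lemma inv_four_mul_le_norm_boundaryVector_sq (Ω : Set (Lam d L)) (κ : Lam d L)
    (hω : (∑ ν, 2 * (1 - Real.cos (2 * Real.pi * (κ ν).val / L))) ≤ 1 / 2)
    {x : Lam d L} (hx : x ∈ bdry Ω) :
    1 / (4 * (L : ℝ) ^ d) ≤ ‖boundaryVector Ω κ x‖ ^ 2 := by
  have hN : 0 < (L : ℝ) ^ d := pow_pos (Nat.cast_pos.mpr (NeZero.pos L)) d
  obtain ⟨y₀, hy₀, hxy₀⟩ := hx.2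
  have hre : 3 / 4 * ((L : ℝ) ^ d)⁻¹ ≤ ‖planeWave d L κ x‖ * ‖boundaryVector Ω κ x‖ := by
    rw [boundaryVector, proj_mul_lap_mul_proj_mulVec_apply
      (Set.disjoint_compl_right_iff_subset.mpr fun _ h ↦ h.1) _ hx]
    refine le_norm_mul_norm_sum_of_le_re ⟨y₀, by simp [hxy₀, hy₀]⟩ _ _ (by positivity)
      fun y hy ↦ ?_
    obtain ⟨hxy, -⟩ : isNN x y ∧ y ∉ Ω := by simpa using hy
    obtain ⟨ν, hν⟩ := re_conj_planeWave_mul_planeWave_of_isNN κ hxy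
    rw [hν, mul_comm]
    gcongr
    exact three_quarters_le_cos_of_sum_le hω ν
  have hsq : (3 / 4 * ((L : ℝ) ^ d)⁻¹) ^ 2 ≤ ((L : ℝ) ^ d)⁻¹ * ‖boundaryVector Ω κ x‖ ^ 2 :=
    calc _ ≤ (‖planeWave d L κ x‖ * ‖boundaryVector Ω κ x‖) ^ 2 :=
          pow_le_pow_left₀ (by positivity) hre 2
      _ = _ := by rw [mul_pow, norm_planeWave_sq]
  rw [div_le_iff₀ (by positivity)]
  field_simp at hsq
  linarith

end Torus

theorem boundary_vector_lower_bound_general (d L : ℕ) [NeZero L]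
    (Ω : Set (Lam d L)) (κ : Lam d L)
    (hω : (∑ ν, 2 * (1 - Real.cos (2 * Real.pi * (κ ν).val / L))) ≤ 1 / 2) :
    ((bdry Ω).ncard : ℝ) / (4 * (L : ℝ) ^ d) ≤
      ∑ x, ‖(proj (bdry Ω) * lap d L * proj Ωᶜ).mulVec (planeWave d L κ) x‖ ^ 2 := by
  calc ((bdry Ω).ncard : ℝ) / (4 * (L : ℝ) ^ d)
      = (bdry Ω).toFinset.card • (1 / (4 * (L : ℝ) ^ d)) := by
        rw [Set.ncard_eq_toFinset_card', nsmul_eq_mul]; ring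
    _ ≤ ∑ x ∈ (bdry Ω).toFinset, ‖boundaryVector Ω κ x‖ ^ 2 :=
        Finset.card_nsmul_le_sum _ _ _ fun x hx ↦
          inv_four_mul_le_norm_boundaryVector_sq Ω κ hω (Set.mem_toFinset.mp hx)
    _ ≤ ∑ x, ‖boundaryVector Ω κ x‖ ^ 2 :=
        Finset.sum_le_sum_of_subset_of_nonneg (Finset.subset_univ _) fun _ _ _ ↦ by positivity

/-- Eq. (3.68), lower bound on the boundary vector: for
`k = (2π/L)κ ∈ Λ*` with `ω(k) = Σ_ν 2(1-cos k_ν) ≤ 1/2`, the boundary vector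
`b_k = P_{∂Ω} Δ P_{Ω^c} ψ_k` satisfies `‖b_k‖² ≥ |∂Ω|/(4|Λ|)`. -/
theorem boundary_vector_lower_bound (d L : ℕ) (hd : 1 ≤ d) [NeZero L]
    (hLeven : Even L) (hL2 : 2 ≤ L) (Ω : Set (Lam d L)) (κ : Lam d L)
    (hω : (∑ ν, 2 * (1 - Real.cos (2 * Real.pi * (κ ν).val / L))) ≤ 1 / 2) :
    ((bdry Ω).ncard : ℝ) / (4 * (L : ℝ) ^ d) ≤
      ∑ x, ‖(proj (bdry Ω) * lap d L * proj Ωᶜ).mulVec (planeWave d L κ) x‖ ^ 2 :=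
  boundary_vector_lower_bound_general d L Ω κ hω
end
end
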